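/- Let μ ∈ {μ₁, μ₂} and let w ∈ Perm^sp(μ) not be a translation element, so that some element of {1,…,2n} is proper. Let a be the minimal proper element of {1,…,2n}, with K_a = [ã, a). Then a ≤ n, a < ã, and ã ≠ a*. -/

import Mathlib

open Finset

namespace OrthLM

/-- Membership in the cocharacter lattice `X` of the standard maximal torus of `GO_{2n}`:
integer vectors with `r_i + r_{i*}` independent of `i`. -/
def inX (n : ℕ) (v : Fin (2*n) → ℤ) : Prop :=
  ∀ i j : Fin (2*n), v i + v i.rev = v j + v j.rev

/-- Membership in `S^h_{2n}`: permutations commuting with the involution `i ↦ i* = 2n+1-i`. -/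
def inSh (n : ℕ) (σ : Equiv.Perm (Fin (2*n))) : Prop :=
  ∀ i, σ i.rev = (σ i).rev

/-- Membership in `W°`: elements of `S^h_{2n}` that are even as permutations. -/
def inW0 (n : ℕ) (σ : Equiv.Perm (Fin (2*n))) : Prop :=
  inSh n σ ∧ Equiv.Perm.sign σ = 1

/-- Elements of the ambient group of the Iwahori-Weyl group `W̃ = X ⋊ S^h_{2n}`,
represented as pairs (translation part, finite part). -/
abbrev Wt (n : ℕ) := (Fin (2*n) → ℤ) × Equiv.Perm (Fin (2*n))

/-- Membership in the Iwahori-Weyl group `W̃ = X ⋊ S^h_{2n}`. -/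
def inWt (n : ℕ) (w : Wt n) : Prop := inX n w.1 ∧ inSh n w.2

def wone (n : ℕ) : Wt n := (0, 1)

/-- Multiplication in `W̃` (compatible with the affine action `(v,σ)·x = v + σx`). -/
def wmul (n : ℕ) (w w' : Wt n) : Wt n :=
  (fun i => w.1 i + w'.1 (w.2⁻¹ i), w.2 * w'.2)

/-- Inversion in `W̃`. -/
def winv (n : ℕ) (w : Wt n) : Wt n := (fun i => -(w.1 (w.2 i)), w.2⁻¹)

/-- The translation element `t_μ`. -/
def wtrans (n : ℕ) (μ : Fin (2*n) → ℤ) : Wt n := (μ, 1)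

/-- A finite Weyl group element regarded in `W̃`. -/
def wperm (n : ℕ) (σ : Equiv.Perm (Fin (2*n))) : Wt n := (0, σ)

/-- The affine action of `W̃` on `ℤ^{2n}`: `(v,σ)·x = v + σx` with `(σx)(i) = x(σ⁻¹ i)`. -/
def wact (n : ℕ) (w : Wt n) (x : Fin (2*n) → ℤ) : Fin (2*n) → ℤ :=
  fun i => w.1 i + x (w.2⁻¹ i)

/-- The affine action of `W̃` on `ℝ^{2n}`. -/
def wactR (n : ℕ) (w : Wt n) (x : Fin (2*n) → ℝ) : Fin (2*n) → ℝ :=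
  fun i => (w.1 i : ℝ) + x (w.2⁻¹ i)

/-- The action of a permutation on vectors: `(σμ)(i) = μ(σ⁻¹ i)`. -/
def permAct (n : ℕ) (σ : Equiv.Perm (Fin (2*n))) (μ : Fin (2*n) → ℤ) : Fin (2*n) → ℤ :=
  fun i => μ (σ⁻¹ i)

/-- The cocharacter `μ₁ = (1^{(n)}, 0^{(n)})`. -/
def mu1 (n : ℕ) : Fin (2*n) → ℤ := fun j => if (j:ℕ) < n then 1 else 0

/-- The cocharacter `μ₂ = (1^{(n-1)}, 0, 1, 0^{(n-1)})`. -/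
def mu2 (n : ℕ) : Fin (2*n) → ℤ := fun j => if (j:ℕ) < n - 1 ∨ (j:ℕ) = n then 1 else 0

/-- The vertices `ω_k = ((-1)^{(k)}, 0^{(2n-k)})` of the standard extended alcove. -/
def om (n : ℕ) (k : ℕ) : Fin (2*n) → ℤ := fun j => if (j:ℕ) < k then -1 else 0

/-- The extended alcove `v_k = w·ω_k` of `w`. -/
def valc (n : ℕ) (w : Wt n) (k : ℕ) : Fin (2*n) → ℤ := wact n w (om n k)

/-- The vector `μ_k^w = v_k - ω_k`. -/
def muk (n : ℕ) (w : Wt n) (k : ℕ) : Fin (2*n) → ℤ :=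
  fun j => valc n w k j - om n k j

/-- The set `E_k^w = {j : μ_k^w(j) = 0}`. -/
def Ew (n : ℕ) (w : Wt n) (k : ℕ) : Finset (Fin (2*n)) :=
  univ.filter fun j => muk n w k j = 0

/-- `GL`-permissibility: `Σ v_0 = n` and `ω_k ≤ v_k ≤ ω_k + (1,…,1)` for `0 ≤ k ≤ 2n-1`. -/
def GLperm (n : ℕ) (w : Wt n) : Prop :=
  (∑ j, valc n w 0 j) = (n : ℤ) ∧
  ∀ k < 2*n, ∀ j, om n k j ≤ valc n w k j ∧ valc n w k j ≤ om n k j + 1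

/-- A vector `μ ∈ {0,1}^{2n}` is totally isotropic if `μ(j) + μ(j*) = 1` for all `j`. -/
def TotIso (n : ℕ) (μ : Fin (2*n) → ℤ) : Prop := ∀ j, μ j + μ j.rev = 1

/-- `μ`-spin-permissibility: `GL`-permissible and every totally isotropic `μ_k^w`
(for `0 ≤ k ≤ n`) lies in the `W°`-orbit of `μ`. -/
def SpinPerm (n : ℕ) (μ : Fin (2*n) → ℤ) (w : Wt n) : Prop :=
  GLperm n w ∧ ∀ k ≤ n, TotIso n (muk n w k) →
    ∃ σ, inW0 n σ ∧ muk n w k = permAct n σ μ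

/-- Membership in the coroot lattice `Q^∨`. -/
def inQv (n : ℕ) (v : Fin (2*n) → ℤ) : Prop :=
  inX n v ∧ (∀ i, v i + v i.rev = 0) ∧
  Even (∑ i ∈ univ.filter (fun i : Fin (2*n) => (i:ℕ) < n), v i)

/-- Membership in the affine Weyl group `W_a = Q^∨ ⋊ W°`. -/
def inWa (n : ℕ) (x : Wt n) : Prop := inQv n x.1 ∧ inW0 n x.2

/-- The affine reflection `s_{i,j;d}` (for `j ∉ {i, i*}`), sending `x` to the vector with
`x_j + d` in slot `i`, `x_i - d` in slot `j`, `x_{i*} + d` in slot `j*`, `x_{j*} - d` in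
slot `i*`. -/
def wrefl (n : ℕ) (i j : Fin (2*n)) (d : ℤ) : Wt n :=
  (fun l => if l = i then d else if l = j then -d else if l = j.rev then d
            else if l = i.rev then -d else 0,
   Equiv.swap i j * Equiv.swap i.rev j.rev)

/-- Successor modulo `2n` on representatives `{0,…,2n-1}` of `ℤ/2nℤ`. -/
def csucc (n : ℕ) (k : Fin (2*n)) : Fin (2*n) :=
  ⟨((k:ℕ) + 1) % (2*n), Nat.mod_lt _ k.pos⟩

/-- Predecessor modulo `2n`. -/
def cpred (n : ℕ) (k : Fin (2*n)) : Fin (2*n) :=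
  ⟨((k:ℕ) + (2*n - 1)) % (2*n), Nat.mod_lt _ k.pos⟩

/-- Negation modulo `2n`. -/
def cneg (n : ℕ) (k : Fin (2*n)) : Fin (2*n) :=
  ⟨(2*n - (k:ℕ)) % (2*n), Nat.mod_lt _ k.pos⟩

/-- The star involution on classes mod `2n`: the class of `m` goes to the class of
`m* = 2n+1-m`, i.e. `c ↦ 1 - c`. -/
def cstar (n : ℕ) (k : Fin (2*n)) : Fin (2*n) := csucc n (cneg n k)

/-- The representative in `{1,…,2n}` of a class mod `2n`. -/
def pv (n : ℕ) (k : Fin (2*n)) : ℕ := if (k:ℕ) = 0 then 2*n else (k:ℕ)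

/-- The cyclic interval `[a, b)` in `ℤ/2nℤ`. -/
def cyc (n : ℕ) (a b : Fin (2*n)) : Finset (Fin (2*n)) :=
  univ.filter fun k => ((k:ℕ) + 2*n - (a:ℕ)) % (2*n) < ((b:ℕ) + 2*n - (a:ℕ)) % (2*n)

/-- The set `K_m = {k ∈ ℤ/2nℤ : μ_k^w(m) = 0}` (indices `m` are 0-indexed: the slot `m`
corresponds to the paper's `m+1 ∈ {1,…,2n}`; classes are represented by `{0,…,2n-1}`). -/
def Kset (n : ℕ) (w : Wt n) (m : Fin (2*n)) : Finset (Fin (2*n)) :=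
  univ.filter fun k => muk n w (k:ℕ) m = 0

/-- The slot `m` is proper: `K_{m+1}` (paper indexing) is a cyclic interval `[m̃, m+1)`
with lower endpoint `m̃` different from the class of `m+1`. -/
def isProper (n : ℕ) (w : Wt n) (m : Fin (2*n)) : Prop :=
  ∃ mt, mt ≠ csucc n m ∧ Kset n w m = cyc n mt (csucc n m)

/-- The constraint cutting out `X ⊗ ℝ` inside `ℝ^{2n}`. -/
def inXR (n : ℕ) (x : Fin (2*n) → ℝ) : Prop :=
  ∀ i j : Fin (2*n), x i + x i.rev = x j + x j.rev

/-- The closure (in `X ⊗ ℝ`, lifted to `ℝ^{2n}`) of the preimage `Ã` of the base alcove: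
the points of `X ⊗ ℝ` on which every positive root `x_i - x_j`, `x_i + x_j - c(x)`
(`1 ≤ i < j ≤ n`) takes values in `[-1, 0]`. -/
def ClA (n : ℕ) : Set (Fin (2*n) → ℝ) :=
  {x | inXR n x ∧
       ∀ i j : Fin (2*n), i < j → (j:ℕ) < n →
         (-1 ≤ x i - x j ∧ x i - x j ≤ 0 ∧
          -1 ≤ x i + x j - (x i + x i.rev) ∧ x i + x j - (x i + x i.rev) ≤ 0)}

/-- The stabilizer `Ω` in `W̃` of the base alcove. -/
def inOmega (n : ℕ) (w : Wt n) : Prop :=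
  inWt n w ∧ (wactR n w) '' ClA n = ClA n

/-- The Coxeter generators of `W_a`: the reflections in the walls of the base alcove,
namely `s_{i,i+1;0}` for `1 ≤ i ≤ n-1`, `s_{n-1,n+1;0}`, and `s_{1,2n-1;-1}`
(paper 1-indexed; here 0-indexed). -/
def sgens (n : ℕ) (hn : 2 ≤ n) : Set (Wt n) :=
  {w | (∃ i : Fin (2*n), (i:ℕ) + 1 < n ∧ w = wrefl n i (csucc n i) 0) ∨
       w = wrefl n ⟨n-2, by omega⟩ ⟨n, by omega⟩ 0 ∨
       w = wrefl n ⟨0, by omega⟩ ⟨2*n-2, by omega⟩ (-1)}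

def wprod (n : ℕ) (L : List (Wt n)) : Wt n := L.foldr (wmul n) (wone n)

/-- A word in the Coxeter generators of `W_a`. -/
def isWord (n : ℕ) (hn : 2 ≤ n) (L : List (Wt n)) : Prop := ∀ s ∈ L, s ∈ sgens n hn

/-- The length function on `W̃`: `ℓ(xω) = ℓ(x)` for `x ∈ W_a`, `ω ∈ Ω`, where `ℓ(x)` is
the minimal length of a word in the Coxeter generators expressing `x`. -/
noncomputable def lenW (n : ℕ) (hn : 2 ≤ n) (w : Wt n) : ℕ :=
  sInf {m | ∃ L ω, isWord n hn L ∧ L.length = m ∧ inOmega n ω ∧ w = wmul n (wprod n L) ω}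

/-- The Bruhat order on `W̃`: `xω ≤ x'ω'` iff `ω = ω'` and `x ≤ x'` in `W_a`, the latter
expressed by the subword property for a reduced word of `x'`. -/
def wle (n : ℕ) (hn : 2 ≤ n) (w w' : Wt n) : Prop :=
  ∃ L ω, isWord n hn L ∧ inOmega n ω ∧ w' = wmul n (wprod n L) ω ∧
    L.length = lenW n hn w' ∧ ∃ L', L'.Sublist L ∧ w = wmul n (wprod n L') ω

/-- Strict Bruhat order on `W̃`. -/
def wlt (n : ℕ) (hn : 2 ≤ n) (w w' : Wt n) : Prop := wle n hn w w' ∧ w ≠ w'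

/-- The `μ`-admissible set `Adm°(μ)` for `G°`: `w ≤ σ t_μ σ⁻¹` for some `σ ∈ W°`. -/
def AdmO (n : ℕ) (hn : 2 ≤ n) (μ : Fin (2*n) → ℤ) (w : Wt n) : Prop :=
  ∃ σ, inW0 n σ ∧
    wle n hn w (wmul n (wperm n σ) (wmul n (wtrans n μ) (wperm n σ⁻¹)))

/-- The `μ`-admissible set `Adm(μ)` for `G`: `w ≤ σ t_μ σ⁻¹` for some `σ ∈ S^h_{2n}`. -/
def AdmFull (n : ℕ) (hn : 2 ≤ n) (μ : Fin (2*n) → ℤ) (w : Wt n) : Prop :=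
  ∃ σ, inSh n σ ∧
    wle n hn w (wmul n (wperm n σ) (wmul n (wtrans n μ) (wperm n σ⁻¹)))

/-- The element `τ = (n, n+1) ∈ S^h_{2n}` (paper 1-indexed). -/
def tau (n : ℕ) (hn : 2 ≤ n) : Equiv.Perm (Fin (2*n)) :=
  Equiv.swap ⟨n-1, by omega⟩ ⟨n, by omega⟩

/-!
Write `σ` for the finite part of `w`. `K_b` is the cyclic interval `[σ⁻¹(b) + 1, b + 1)` when
`σ⁻¹ b ≠ b`, and is empty or everything otherwise; so the proper elements are exactly those moved
by `σ`. Hence `σ` fixes everything below `a` (and, commuting with `*`, everything above `a*`),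
which forces `a ≤ n` and `a < σ⁻¹(a) + 1 = ã`.

If `ã = a*`, i.e. `σ` swaps `a` and `a*`, then `μ_a^w` and `μ_{a+1}^w` are totally isotropic and
`μ_{a+1}^w = (a, a*) · μ_a^w`. Both lie in the `W°`-orbit of `μ`, so an odd element of
`S^h_{2n}` fixes `μ_a^w`. But an element of `S^h_{2n}` fixing a totally isotropic vector
preserves its zero set `Z`, and `*` exchanges `Z` with its complement, so that element is even.
-/

open Equiv Equiv.Perm

variable {n : ℕ}

theorem sign_eq_one_of_commute_of_exchanges {α : Type*} [Fintype α] [DecidableEq α]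
    {σ ι : Perm α} (hσι : Commute σ ι) {p : α → Prop} [DecidablePred p]
    (hιp : ∀ x, p (ι x) ↔ ¬ p x) (hσp : ∀ x, p (σ x) ↔ p x) : sign σ = 1 := by
  let e : {x // p x} ≃ {x // ¬ p x} := ι.subtypeEquiv fun x => by rw [hιp, not_not]
  let s := σ.subtypePerm (p := p) hσp
  -- on `¬p`, `σ` is the conjugate of `s` by `ι`, so `sign σ` is a square
  have hσ : σ = s.subtypeCongr (e.permCongr s) := by
    ext x
    by_cases hx : p x
    · simp [Perm.subtypeCongr.left_apply _ _ hx, s]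
    · rw [Perm.subtypeCongr.right_apply _ _ hx]
      simpa [e, s] using congr($(hσι.eq) (ι.symm x))
  rw [hσ, sign_subtypeCongr, sign_permCongr, Int.units_mul_self]

theorem lt_inv_apply_of_forall_lt_apply_eq {α : Type*} [LinearOrder α] {σ : Perm α} {a : α}
    (hfix : ∀ b < a, σ b = b) (ha : σ⁻¹ a ≠ a) : a < σ⁻¹ a := by
  refine lt_of_le_of_ne (not_lt.mp fun hlt => ha ?_) ha.symm
  simpa using (hfix _ hlt).symm

lemma mod_eq_ite_of_lt_two_mul {x m : ℕ} (h : x < 2 * m) :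
    x % m = if x < m then x else x - m := by
  split_ifs with hx
  · exact Nat.mod_eq_of_lt hx
  · rw [Nat.mod_eq_sub_mod (by omega), Nat.mod_eq_of_lt (by omega)]

lemma csucc_val (k : Fin (2*n)) :
    (csucc n k : ℕ) = if (k:ℕ) + 1 = 2*n then 0 else (k:ℕ) + 1 := by
  show ((k:ℕ) + 1) % (2*n) = _
  rw [mod_eq_ite_of_lt_two_mul (by omega)]
  split_ifs <;> omega

lemma csucc_injective : Function.Injective (csucc n) := by
  intro x y h
  have := csucc_val x
  rw [h, csucc_val] at this
  ext
  split_ifs at this <;> omega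

lemma pv_csucc (k : Fin (2*n)) : pv n (csucc n k) = (k:ℕ) + 1 := by
  by_cases h : (k:ℕ) + 1 = 2*n <;> simp [pv, csucc_val, h]

lemma mem_cyc_iff {x y k : Fin (2*n)} :
    k ∈ cyc n x y ↔
      if (x:ℕ) ≤ y then (x:ℕ) ≤ k ∧ (k:ℕ) < y else (x:ℕ) ≤ k ∨ (k:ℕ) < y := by
  simp only [cyc, mem_filter, mem_univ, true_and]
  rw [mod_eq_ite_of_lt_two_mul (by omega), mod_eq_ite_of_lt_two_mul (by omega)]
  split_ifs <;> omega

lemma left_mem_cyc {x y : Fin (2*n)} (h : x ≠ y) : x ∈ cyc n x y := by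
  rw [mem_cyc_iff]
  have : (x:ℕ) ≠ y := Fin.val_ne_of_ne h
  split_ifs <;> omega

lemma right_notMem_cyc {x y : Fin (2*n)} : y ∉ cyc n x y := by
  rw [mem_cyc_iff]
  split_ifs <;> omega

lemma cyc_left_injective {x y z : Fin (2*n)} (hx : x ≠ z) (hy : y ≠ z)
    (h : cyc n x z = cyc n y z) : x = y := by
  have hxy := h ▸ left_mem_cyc hx
  have hyx := h.symm ▸ left_mem_cyc hy
  rw [mem_cyc_iff] at hxy hyx
  have := Fin.val_ne_of_ne hx
  have := Fin.val_ne_of_ne hy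
  ext
  split_ifs at hxy hyx <;> omega

lemma muk_apply (w : Wt n) (k : ℕ) (j : Fin (2*n)) :
    muk n w k j =
      w.1 j + (if (j:ℕ) < k then 1 else 0) - (if (w.2⁻¹ j : ℕ) < k then 1 else 0) := by
  simp only [muk, valc, wact, om]
  split_ifs <;> ring

lemma muk_zero (w : Wt n) : muk n w 0 = w.1 := by
  ext j
  simp [muk_apply]

lemma muk_succ (w : Wt n) (k : ℕ) (j : Fin (2*n)) :
    muk n w (k + 1) j =
      muk n w k j + (if (j:ℕ) = k then 1 else 0) - (if (w.2⁻¹ j : ℕ) = k then 1 else 0) := by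
  simp only [muk_apply]
  split_ifs <;> omega

namespace GLperm

variable {w : Wt n}

lemma muk_mem (hg : GLperm n w) {k : ℕ} (hk : k < 2*n) (j : Fin (2*n)) :
    muk n w k j = 0 ∨ muk n w k j = 1 := by
  have := hg.2 k hk j
  simp only [muk]
  omega

lemma Kset_eq_cyc (hg : GLperm n w) {b : Fin (2*n)} (hb : w.2⁻¹ b ≠ b) :
    Kset n w b = cyc n (csucc n (w.2⁻¹ b)) (csucc n b) := by
  have hs : ((w.2⁻¹ b : Fin (2*n)) : ℕ) ≠ b := Fin.val_ne_of_ne hb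
  have hmb := hg.muk_mem b.isLt b
  have hms := hg.muk_mem (w.2⁻¹ b).isLt b
  rw [muk_apply] at hmb hms
  ext k
  have hmk := hg.muk_mem k.isLt b
  rw [Kset, mem_filter, mem_cyc_iff, csucc_val, csucc_val, muk_apply]
  rw [muk_apply] at hmk
  simp only [mem_univ, true_and]
  split_ifs at hmb hms hmk ⊢ <;> omega

lemma isProper_iff (hg : GLperm n w) {b : Fin (2*n)} : isProper n w b ↔ w.2⁻¹ b ≠ b := by
  refine ⟨?_, fun hb => ⟨_, csucc_injective.ne hb, hg.Kset_eq_cyc hb⟩⟩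
  rintro ⟨c, hc, hK⟩ hb
  have hconst : ∀ k : ℕ, muk n w k b = w.1 b := fun k => by rw [muk_apply, hb]; ring
  have hin : c ∈ Kset n w b := hK ▸ left_mem_cyc hc
  have hout : csucc n b ∉ Kset n w b := hK ▸ right_notMem_cyc
  simp only [Kset, mem_filter, mem_univ, true_and, hconst] at hin hout
  exact hout hin

lemma translation_add_rev (hg : GLperm n w) (hX : inX n w.1) (j : Fin (2*n)) :
    w.1 j + w.1 j.rev = 1 := by
  have hsum : ∑ i, w.1 i = n := by simpa [valc, wact, om] using hg.1
  have hpairs : ∑ i, (w.1 i + w.1 i.rev) = ∑ _i : Fin (2*n), (w.1 j + w.1 j.rev) :=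
    sum_congr rfl fun i _ => hX i j
  have hrev : ∑ i : Fin (2*n), w.1 i.rev = ∑ i, w.1 i := Equiv.sum_comp Fin.revPerm w.1
  rw [sum_add_distrib, hrev, hsum, sum_const, card_univ, Fintype.card_fin, nsmul_eq_mul] at hpairs
  have hn : (2 * n : ℤ) ≠ 0 := by have := j.isLt; omega
  refine mul_left_cancel₀ hn ?_
  push_cast at hpairs
  linarith

end GLperm

lemma inSh_iff_commute {σ : Perm (Fin (2*n))} : inSh n σ ↔ Commute σ Fin.revPerm := by
  simp only [inSh, Commute, SemiconjBy, Perm.ext_iff, Perm.mul_apply, Fin.revPerm_apply]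

lemma inSh.inv_apply_rev {σ : Perm (Fin (2*n))} (hσ : inSh n σ) (j : Fin (2*n)) :
    σ⁻¹ j.rev = (σ⁻¹ j).rev := by
  rw [Perm.inv_eq_iff_eq, hσ, Perm.coe_inv, apply_symm_apply]

lemma inSh.mul {σ τ : Perm (Fin (2*n))} (hσ : inSh n σ) (hτ : inSh n τ) : inSh n (σ * τ) :=
  inSh_iff_commute.mpr ((inSh_iff_commute.mp hσ).mul_left (inSh_iff_commute.mp hτ))

lemma inSh.inv {σ : Perm (Fin (2*n))} (hσ : inSh n σ) : inSh n σ⁻¹ :=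
  inSh_iff_commute.mpr (inSh_iff_commute.mp hσ).inv_left

lemma inSh_swap_rev (i : Fin (2*n)) : inSh n (swap i i.rev) := by
  rw [inSh_iff_commute, Commute, SemiconjBy, mul_swap_eq_swap_mul]
  simp [swap_comm]

lemma permAct_mul (σ τ : Perm (Fin (2*n))) (ν : Fin (2*n) → ℤ) :
    permAct n (σ * τ) ν = permAct n σ (permAct n τ ν) := by
  ext j
  simp [permAct, mul_inv_rev]

lemma permAct_one (ν : Fin (2*n) → ℤ) : permAct n 1 ν = ν := rfl

lemma inSh.sign_eq_one_of_permAct_eq {σ : Perm (Fin (2*n))} (hσ : inSh n σ)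
    {ν : Fin (2*n) → ℤ} (hν : TotIso n ν) (h : permAct n σ ν = ν) : sign σ = 1 := by
  refine sign_eq_one_of_commute_of_exchanges (inSh_iff_commute.mp hσ) (p := fun x => ν x ≤ 0)
    (fun x => ?_) (fun x => ?_)
  · have := hν x
    simp only [Fin.revPerm_apply]
    omega
  · have := congrFun h (σ x)
    simp only [permAct, Perm.coe_inv, symm_apply_apply] at this
    rw [this]

lemma totIso_muk_zero {w : Wt n} (hv : ∀ j, w.1 j + w.1 j.rev = 1) : TotIso n (muk n w 0) := by
  rw [muk_zero]
  exact hv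

lemma totIso_muk_succ {w : Wt n} (hsh : inSh n w.2) {k : Fin (2*n)}
    (hk : w.2 k = k ∨ w.2 k = k.rev) (h : TotIso n (muk n w k)) :
    TotIso n (muk n w ((k:ℕ) + 1)) := by
  intro j
  have := h j
  rw [muk_succ, muk_succ, hsh.inv_apply_rev]
  simp only [Fin.val_inj, Perm.inv_eq_iff_eq, Fin.rev_eq_iff]
  rcases hk with hk | hk <;> simp only [hsh k, hk, Fin.rev_rev] <;> split_ifs <;> omega

lemma totIso_muk_of_forall_lt_apply_eq {w : Wt n} (hsh : inSh n w.2)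
    (hv : ∀ j, w.1 j + w.1 j.rev = 1) {k : Fin (2*n)} (hfix : ∀ b < k, w.2 b = b) :
    TotIso n (muk n w k) := by
  suffices ∀ m ≤ (k:ℕ), TotIso n (muk n w m) from this k le_rfl
  intro m hm
  induction m with
  | zero => exact totIso_muk_zero hv
  | succ m ih =>
    have hm : (⟨m, by omega⟩ : Fin (2*n)) < k := Fin.lt_def.mpr (by simp; omega)
    exact totIso_muk_succ hsh (Or.inl (hfix _ hm)) (ih (by omega))

lemma muk_succ_eq_permAct_swap {w : Wt n} (hg : GLperm n w) (hsh : inSh n w.2)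
    {k : Fin (2*n)} (hkn : (k:ℕ) < n) (hk : w.2⁻¹ k = k.rev) (hiso : TotIso n (muk n w k)) :
    muk n w ((k:ℕ) + 1) = permAct n (swap k k.rev) (muk n w k) := by
  have hk' : w.2⁻¹ k.rev = k := by rw [hsh.inv_apply_rev, hk, Fin.rev_rev]
  have hne : k ≠ k.rev := Fin.ne_of_val_ne (by rw [Fin.val_rev]; omega)
  have hνk : muk n w k k = 0 := by
    have h0 := hg.muk_mem (k := k) (by omega) k
    have h1 := hg.muk_mem (k := k + 1) (by omega) k
    rw [muk_succ, hk] at h1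
    simp only [Fin.val_inj, hne.symm, if_true, if_false] at h1
    omega
  have hνk' : muk n w k k.rev = 1 := by linarith [hiso k]
  ext j
  rw [muk_succ]
  by_cases hj : j = k
  · subst hj
    simp [permAct, hk, hνk, hνk']
    omega
  by_cases hj' : j = k.rev
  · subst hj'
    simp [permAct, hk', hνk, hνk']
    omega
  have hσj : w.2⁻¹ j ≠ k := fun h => hj' (w.2⁻¹.injective (h.trans hk'.symm))
  simp only [permAct, swap_inv, swap_apply_of_ne_of_ne hj hj', Fin.val_inj, hj, hσj, if_false,
    add_zero, sub_zero]

lemma SpinPerm.inv_apply_ne_rev {μ : Fin (2*n) → ℤ} {w : Wt n} (hsp : SpinPerm n μ w)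
    (hsh : inSh n w.2) {k : Fin (2*n)} (hkn : (k:ℕ) < n) (hiso : TotIso n (muk n w k)) :
    w.2⁻¹ k ≠ k.rev := by
  intro hk
  have hσk : w.2 k = k.rev := by
    rw [← Fin.rev_rev (w.2 k), ← hsh, ← Perm.inv_eq_iff_eq.mp hk]
  have hne : k ≠ k.rev := Fin.ne_of_val_ne (by rw [Fin.val_rev]; omega)
  obtain ⟨τ₁, hτ₁, h₁⟩ := hsp.2 k hkn.le hiso
  obtain ⟨τ₂, hτ₂, h₂⟩ := hsp.2 (k + 1) hkn (totIso_muk_succ hsh (Or.inr hσk) hiso)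
  have hρ : permAct n (swap k k.rev * τ₂ * τ₁⁻¹) (muk n w k) = muk n w k := by
    conv_lhs => rw [h₁]
    rw [← permAct_mul, inv_mul_cancel_right, permAct_mul, ← h₂,
      muk_succ_eq_permAct_swap hsp.1 hsh hkn hk hiso, ← permAct_mul, swap_mul_self, permAct_one]
  have hsign :=
    (((inSh_swap_rev k).mul hτ₂.1).mul hτ₁.1.inv).sign_eq_one_of_permAct_eq hiso hρ
  simp [sign_swap hne, hτ₁.2, hτ₂.2] at hsign

/-- In the paper's 1-indexing, slot `a` is `a + 1` and `ã` is `pv n at' ∈ {1,…,2n}`. -/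
theorem minimal_proper_element_general (n : ℕ)
    (μ : Fin (2*n) → ℤ)
    (w : Wt n) (hw : inWt n w) (hsp : SpinPerm n μ w)
    (a at' : Fin (2*n)) (hne : at' ≠ csucc n a)
    (hKa : Kset n w a = cyc n at' (csucc n a))
    (hmin : ∀ b : Fin (2*n), isProper n w b → a ≤ b) :
    (a:ℕ) + 1 ≤ n ∧ (a:ℕ) + 1 < pv n at' ∧ at' ≠ csucc n a.rev := by
  obtain ⟨hX, hsh⟩ := hw
  have hg := hsp.1
  have ha : w.2⁻¹ a ≠ a := hg.isProper_iff.mp ⟨at', hne, hKa⟩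
  have hfix : ∀ b < a, w.2 b = b := fun b hb => by
    by_contra h
    exact (hmin b (hg.isProper_iff.mpr fun h' => h (Perm.inv_eq_iff_eq.mp h').symm)).not_gt hb
  have hat' : at' = csucc n (w.2⁻¹ a) :=
    cyc_left_injective hne (csucc_injective.ne ha) (hKa.symm.trans (hg.Kset_eq_cyc ha))
  have hlt : a < w.2⁻¹ a := lt_inv_apply_of_forall_lt_apply_eq hfix ha
  have han : (a:ℕ) < n := by
    by_contra! h
    have hrev : w.2 a.rev = a.rev := hfix _ (Fin.lt_def.mpr (by rw [Fin.val_rev]; omega))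
    exact ha (Perm.inv_eq_iff_eq.mpr (by rw [← Fin.rev_rev a, hsh, hrev]))
  refine ⟨han, ?_, ?_⟩
  · rw [hat', pv_csucc]
    exact Nat.succ_lt_succ hlt
  · rw [hat', csucc_injective.ne_iff]
    exact hsp.inv_apply_ne_rev hsh han
      (totIso_muk_of_forall_lt_apply_eq hsh (hg.translation_add_rev hX) hfix)

/-- Let `μ ∈ {μ₁, μ₂}` and let `w ∈ Perm^sp(μ)` not be a translation
element, and let `a` be the minimal proper slot, with `K_a = [ã, a)`.  Then (in the
paper's 1-indexing, where slot `a` has paper index `(a:ℕ)+1` and the class `ã`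
corresponds to the paper element `pv ã ∈ {1,…,2n}`): `a ≤ n`, `a < ã`, and `ã ≠ a*`. -/
theorem minimal_proper_element (n : ℕ) (hn : 2 ≤ n)
    (μ : Fin (2*n) → ℤ) (hμ : μ = mu1 n ∨ μ = mu2 n)
    (w : Wt n) (hw : inWt n w) (hsp : SpinPerm n μ w)
    (a at' : Fin (2*n)) (hne : at' ≠ csucc n a)
    (hKa : Kset n w a = cyc n at' (csucc n a))
    (hmin : ∀ b : Fin (2*n), isProper n w b → a ≤ b) :
    (a:ℕ) + 1 ≤ n ∧ (a:ℕ) + 1 < pv n at' ∧ at' ≠ csucc n a.rev :=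
  minimal_proper_element_general n μ w hw hsp a at' hne hKa hmin

end OrthLM
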